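/- arXiv:1904.09859 — 2 statements merged into one kernel-verified Lean document; each statement's English description precedes it below -/
import Mathlib

section
/- Lift is a semiring homomorphism up to ≈: for all naturals n, m and every interpretation type σ, lift_σ(n+m) ≈ lift_σ(n) ⊕ lift_σ(m), lift_σ(n·m) ≈ lift_σ(n) ⊗ lift_σ(m), and flatten_σ(lift_σ(n)) ≈ n. -/
/-- Kinds: `κ ::= * | κ ⇒ κ`. -/
inductive Kind : Type
  | star : Kind
  | arr : Kind → Kind → Kind

/-- Closed β-normal interpretation types over a family `Con κ` of closed type
constructors of each kind: the base type `nat`, arrow types, and universal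
types (a universal type is given by its instantiation function `Con κ → ITy`). -/
inductive ITy (Con : Kind → Type) : Type
  | nat : ITy Con
  | arrow : ITy Con → ITy Con → ITy Con
  | all : (κ : Kind) → (Con κ → ITy Con) → ITy Con

/-- The defining (coinductive unfolding) clauses of the typewise ordering with
base comparison `P` of natural-number normal forms at type `nat`:
pointwise over closed normal term arguments at arrow types, and pointwise over
closed type constructors at universal types. -/
def Unfolds {Con : Kind → Type} {Tm : Type}
    (app : Tm → Tm → Tm) (tapp : (κ : Kind) → Tm → Con κ → Tm)
    (Normal : ITy Con → Tm → Prop) (nf : Tm → ℕ)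
    (P : ℕ → ℕ → Prop) (R : ITy Con → Tm → Tm → Prop) : Prop :=
  (∀ s t, R ITy.nat s t ↔ P (nf s) (nf t)) ∧
  (∀ a b s t, R (ITy.arrow a b) s t ↔ ∀ q, Normal a q → R b (app s q) (app t q)) ∧
  (∀ (κ : Kind) (body : Con κ → ITy Con) s t,
    R (ITy.all κ body) s t ↔ ∀ ρ : Con κ, R (body ρ) (tapp κ s ρ) (tapp κ t ρ))

/-- The interpretation calculus: closed interpretation terms with application,
type application, natural number literals and normal forms, the polymorphic
operations `⊕`, `⊗`, `lift`, `flatten`, a reduction relation `⇝` satisfying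
the type-directed rules, and the coinductive typewise orderings `≻`, `⪰`. -/
structure InterpCalc (Con : Kind → Type) (Tm : Type) where
  app : Tm → Tm → Tm
  tapp : (κ : Kind) → Tm → Con κ → Tm
  Normal : ITy Con → Tm → Prop
  HasType : ITy Con → Tm → Prop
  nf : Tm → ℕ
  lit : ℕ → Tm
  plus : ITy Con → Tm → Tm → Tm
  times : ITy Con → Tm → Tm → Tm
  lift : ITy Con → Tm → Tm
  flatten : ITy Con → Tm → Tm
  chi : (κ : Kind) → Con κ
  Red : Tm → Tm → Prop
  succ : ITy Con → Tm → Tm → Prop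
  wsucc : ITy Con → Tm → Tm → Prop
  /-- `≻` satisfies the coinductive unfolding clauses with base comparison `>`. -/
  succ_unfold : Unfolds app tapp Normal nf (· > ·) succ
  /-- `⪰` satisfies the coinductive unfolding clauses with base comparison `≥`. -/
  wsucc_unfold : Unfolds app tapp Normal nf (· ≥ ·) wsucc
  /-- Reduction preserves (unique) normal forms. -/
  nf_red : ∀ s t, Red s t → nf s = nf t
  nf_lit : ∀ n, nf (lit n) = n
  red_app_left : ∀ s s' t, Red s s' → Red (app s t) (app s' t)
  red_app_right : ∀ s t t', Red t t' → Red (app s t) (app s t')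
  red_tapp : ∀ (κ : Kind) s s' (ρ : Con κ), Red s s' → Red (tapp κ s ρ) (tapp κ s' ρ)
  /-- `⊕_nat n m ⇝ n + m` (on normal forms). -/
  nf_plus_nat : ∀ s t, nf (plus ITy.nat s t) = nf s + nf t
  /-- `⊗_nat n m ⇝ n · m` (on normal forms). -/
  nf_times_nat : ∀ s t, nf (times ITy.nat s t) = nf s * nf t
  /-- `lift_nat s ⇝ s`. -/
  nf_lift_nat : ∀ s, nf (lift ITy.nat s) = nf s
  /-- `flatten_nat s ⇝ s`. -/
  nf_flatten_nat : ∀ s, nf (flatten ITy.nat s) = nf s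
  /-- `(s ⊕_{σ→τ} t)·q ⇝* (s·q) ⊕_τ (t·q)`. -/
  red_plus_arrow : ∀ a b s t q,
    Relation.ReflTransGen Red (app (plus (ITy.arrow a b) s t) q)
      (plus b (app s q) (app t q))
  /-- `(s ⊕_{∀α.σ} t)·ρ ⇝* (s·ρ) ⊕ (t·ρ)`. -/
  red_plus_all : ∀ (κ : Kind) (body : Con κ → ITy Con) s t (ρ : Con κ),
    Relation.ReflTransGen Red (tapp κ (plus (ITy.all κ body) s t) ρ)
      (plus (body ρ) (tapp κ s ρ) (tapp κ t ρ))
  /-- `(s ⊗_{σ→τ} t)·q ⇝* (s·q) ⊗_τ (t·q)`. -/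
  red_times_arrow : ∀ a b s t q,
    Relation.ReflTransGen Red (app (times (ITy.arrow a b) s t) q)
      (times b (app s q) (app t q))
  /-- `(s ⊗_{∀α.σ} t)·ρ ⇝* (s·ρ) ⊗ (t·ρ)`. -/
  red_times_all : ∀ (κ : Kind) (body : Con κ → ITy Con) s t (ρ : Con κ),
    Relation.ReflTransGen Red (tapp κ (times (ITy.all κ body) s t) ρ)
      (times (body ρ) (tapp κ s ρ) (tapp κ t ρ))
  /-- `lift_{σ→τ}(n)·q ⇝* lift_τ(n)`. -/
  red_lift_arrow : ∀ a b n q,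
    Relation.ReflTransGen Red (app (lift (ITy.arrow a b) n) q) (lift b n)
  /-- `lift_{∀α.σ}(n)·ρ ⇝* lift_σ(n)`. -/
  red_lift_all : ∀ (κ : Kind) (body : Con κ → ITy Con) n (ρ : Con κ),
    Relation.ReflTransGen Red (tapp κ (lift (ITy.all κ body) n) ρ) (lift (body ρ) n)
  /-- `flatten_{σ→τ}(s) ⇝* flatten_τ(s·lift_σ(0))`. -/
  red_flatten_arrow : ∀ a b s,
    Relation.ReflTransGen Red (flatten (ITy.arrow a b) s)
      (flatten b (app s (lift a (lit 0))))
  /-- `flatten_{∀(α:κ).σ}(s) ⇝* flatten_{σ[α:=χ_κ]}(s·χ_κ)`. -/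
  red_flatten_all : ∀ (κ : Kind) (body : Con κ → ITy Con) s,
    Relation.ReflTransGen Red (flatten (ITy.all κ body) s)
      (flatten (body (chi κ)) (tapp κ s (chi κ)))

/-- `≈`: mutual weak comparison. -/
def InterpCalc.Equiv {Con : Kind → Type} {Tm : Type} (C : InterpCalc Con Tm)
    (σ : ITy Con) (s t : Tm) : Prop :=
  C.wsucc σ s t ∧ C.wsucc σ t s

/-! The orderings are invariant under reduction and pointwise at arrow and universal types,
and the reduction rules push `⊕`, `⊗`, `lift` and `flatten` through application and type
application. So, by induction on `σ`, each comparison reduces to one at `nat`, where `⊕`, `⊗`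
and `lift` compute `+`, `·` and the identity on normal forms. Since `⊕`, `⊗` and `flatten` need
not be compatible with reduction inside their arguments, the induction is over arbitrary terms
reducing to lifted literals. -/

open Relation

namespace InterpCalc

variable {Con : Kind → Type} {Tm : Type} (C : InterpCalc Con Tm)

lemma nf_eq_of_reflTransGen {s t : Tm} (h : ReflTransGen C.Red s t) : C.nf s = C.nf t := by
  induction h with
  | refl => rfl
  | tail _ hstep ih => rw [ih, C.nf_red _ _ hstep]

lemma reflTransGen_app_left {s s' : Tm} (q : Tm) (h : ReflTransGen C.Red s s') :
    ReflTransGen C.Red (C.app s q) (C.app s' q) :=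
  h.lift (C.app · q) fun a b hab => C.red_app_left a b q hab

lemma reflTransGen_tapp (κ : Kind) {s s' : Tm} (ρ : Con κ) (h : ReflTransGen C.Red s s') :
    ReflTransGen C.Red (C.tapp κ s ρ) (C.tapp κ s' ρ) :=
  h.lift (C.tapp κ · ρ) fun a b hab => C.red_tapp κ a b ρ hab

lemma unfolds_iff_of_reflTransGen {P : ℕ → ℕ → Prop} {R : ITy Con → Tm → Tm → Prop}
    (hR : Unfolds C.app C.tapp C.Normal C.nf P R) (σ : ITy Con) {s s' t t' : Tm}
    (hs : ReflTransGen C.Red s s') (ht : ReflTransGen C.Red t t') :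
    R σ s t ↔ R σ s' t' := by
  obtain ⟨hnat, harrow, hall⟩ := hR
  induction σ generalizing s s' t t' with
  | nat => rw [hnat, hnat, C.nf_eq_of_reflTransGen hs, C.nf_eq_of_reflTransGen ht]
  | arrow a b _ ihb =>
    rw [harrow, harrow]
    exact forall₂_congr fun q _ =>
      ihb (C.reflTransGen_app_left q hs) (C.reflTransGen_app_left q ht)
  | all κ body ih =>
    rw [hall, hall]
    exact forall_congr' fun ρ =>
      ih ρ (C.reflTransGen_tapp κ ρ hs) (C.reflTransGen_tapp κ ρ ht)

lemma equiv_of_reflTransGen {σ : ITy Con} {s s' t t' : Tm}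
    (hs : ReflTransGen C.Red s s') (ht : ReflTransGen C.Red t t') (h : C.Equiv σ s' t') :
    C.Equiv σ s t :=
  ⟨(C.unfolds_iff_of_reflTransGen C.wsucc_unfold σ hs ht).mpr h.1,
    (C.unfolds_iff_of_reflTransGen C.wsucc_unfold σ ht hs).mpr h.2⟩

lemma equiv_nat_iff {s t : Tm} : C.Equiv ITy.nat s t ↔ C.nf s = C.nf t := by
  rw [Equiv, C.wsucc_unfold.1, C.wsucc_unfold.1]
  exact ⟨fun h => le_antisymm h.2 h.1, fun h => ⟨h.ge, h.le⟩⟩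

lemma equiv_arrow_iff {a b : ITy Con} {s t : Tm} :
    C.Equiv (ITy.arrow a b) s t ↔ ∀ q, C.Normal a q → C.Equiv b (C.app s q) (C.app t q) := by
  simp only [Equiv, C.wsucc_unfold.2.1, ← forall_and]

lemma equiv_all_iff {κ : Kind} {body : Con κ → ITy Con} {s t : Tm} :
    C.Equiv (ITy.all κ body) s t ↔
      ∀ ρ, C.Equiv (body ρ) (C.tapp κ s ρ) (C.tapp κ t ρ) := by
  simp only [Equiv, C.wsucc_unfold.2.2, ← forall_and]

structure IsPointwise (op : ITy Con → Tm → Tm → Tm) (f : ℕ → ℕ → ℕ) : Prop where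
  nf_nat : ∀ s t, C.nf (op ITy.nat s t) = f (C.nf s) (C.nf t)
  red_arrow : ∀ a b s t q,
    ReflTransGen C.Red (C.app (op (ITy.arrow a b) s t) q) (op b (C.app s q) (C.app t q))
  red_all : ∀ (κ : Kind) (body : Con κ → ITy Con) s t (ρ : Con κ),
    ReflTransGen C.Red (C.tapp κ (op (ITy.all κ body) s t) ρ)
      (op (body ρ) (C.tapp κ s ρ) (C.tapp κ t ρ))

lemma isPointwise_plus : C.IsPointwise C.plus (· + ·) :=
  ⟨C.nf_plus_nat, C.red_plus_arrow, C.red_plus_all⟩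

lemma isPointwise_times : C.IsPointwise C.times (· * ·) :=
  ⟨C.nf_times_nat, C.red_times_arrow, C.red_times_all⟩

lemma nf_of_reflTransGen_lift_nat {n : ℕ} {s : Tm}
    (hs : ReflTransGen C.Red s (C.lift ITy.nat (C.lit n))) : C.nf s = n := by
  rw [C.nf_eq_of_reflTransGen hs, C.nf_lift_nat, C.nf_lit]

variable {C} in
lemma IsPointwise.equiv_lift {op : ITy Con → Tm → Tm → Tm} {f : ℕ → ℕ → ℕ}
    (hop : C.IsPointwise op f) (σ : ITy Con) {n m : ℕ} {s t : Tm}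
    (hs : ReflTransGen C.Red s (C.lift σ (C.lit n)))
    (ht : ReflTransGen C.Red t (C.lift σ (C.lit m))) :
    C.Equiv σ (C.lift σ (C.lit (f n m))) (op σ s t) := by
  induction σ generalizing s t with
  | nat =>
    rw [equiv_nat_iff, hop.nf_nat, C.nf_of_reflTransGen_lift_nat hs,
      C.nf_of_reflTransGen_lift_nat ht, C.nf_lift_nat, C.nf_lit]
  | arrow a b _ ihb =>
    refine (C.equiv_arrow_iff).mpr fun q _ =>
      C.equiv_of_reflTransGen (C.red_lift_arrow a b _ q) (hop.red_arrow a b s t q) (ihb ?_ ?_)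
    · exact (C.reflTransGen_app_left q hs).trans (C.red_lift_arrow a b _ q)
    · exact (C.reflTransGen_app_left q ht).trans (C.red_lift_arrow a b _ q)
  | all κ body ih =>
    refine (C.equiv_all_iff).mpr fun ρ =>
      C.equiv_of_reflTransGen (C.red_lift_all κ body _ ρ) (hop.red_all κ body s t ρ)
        (ih ρ ?_ ?_)
    · exact (C.reflTransGen_tapp κ ρ hs).trans (C.red_lift_all κ body _ ρ)
    · exact (C.reflTransGen_tapp κ ρ ht).trans (C.red_lift_all κ body _ ρ)

lemma nf_flatten_of_reflTransGen_lift (σ : ITy Con) {n : ℕ} {s : Tm}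
    (hs : ReflTransGen C.Red s (C.lift σ (C.lit n))) : C.nf (C.flatten σ s) = n := by
  induction σ generalizing s with
  | nat => rw [C.nf_flatten_nat, C.nf_of_reflTransGen_lift_nat hs]
  | arrow a b _ ihb =>
    rw [C.nf_eq_of_reflTransGen (C.red_flatten_arrow a b s)]
    exact ihb ((C.reflTransGen_app_left _ hs).trans (C.red_lift_arrow a b _ _))
  | all κ body ih =>
    rw [C.nf_eq_of_reflTransGen (C.red_flatten_all κ body s)]
    exact ih (C.chi κ) ((C.reflTransGen_tapp κ _ hs).trans (C.red_lift_all κ body _ _))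

end InterpCalc

/-- `lift` is a semiring homomorphism up to `≈`:
`lift_σ(n+m) ≈ lift_σ(n) ⊕ lift_σ(m)`, `lift_σ(n·m) ≈ lift_σ(n) ⊗ lift_σ(m)`,
and `flatten_σ(lift_σ(n)) ≈ n`. -/
theorem lift_is_semiring_hom_up_to_equiv
    {Con : Kind → Type} {Tm : Type} (C : InterpCalc Con Tm) :
    ∀ (σ : ITy Con) (n m : ℕ),
      C.Equiv σ (C.lift σ (C.lit (n + m)))
        (C.plus σ (C.lift σ (C.lit n)) (C.lift σ (C.lit m))) ∧
      C.Equiv σ (C.lift σ (C.lit (n * m)))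
        (C.times σ (C.lift σ (C.lit n)) (C.lift σ (C.lit m))) ∧
      C.Equiv ITy.nat (C.flatten σ (C.lift σ (C.lit n))) (C.lit n) := by
  intro σ n m
  refine ⟨C.isPointwise_plus.equiv_lift σ .refl .refl,
    C.isPointwise_times.equiv_lift σ .refl .refl, ?_⟩
  rw [C.equiv_nat_iff, C.nf_flatten_of_reflTransGen_lift σ .refl, C.nf_lit]
end

section
/- Subterm and strict-increase laws: for all interpretation terms s, t of type σ, s ⊕_σ t ⪰ s and s ⊕_σ t ⪰ t; and for every natural number n > 0, s ⊕_σ lift_σ(n) ≻ s and lift_σ(n) ⊕_σ t ≻ t. -/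
section Aux
variable {Con : Kind → Type} {Tm : Type} (C : InterpCalc Con Tm)

lemma nf_rt {s t : Tm} (h : Relation.ReflTransGen C.Red s t) : C.nf s = C.nf t := by
  induction h with
  | refl => rfl
  | tail _ h2 ih => exact ih.trans (C.nf_red _ _ h2)

lemma rt_app_left {s s' : Tm} (t : Tm) (h : Relation.ReflTransGen C.Red s s') :
    Relation.ReflTransGen C.Red (C.app s t) (C.app s' t) := by
  induction h with
  | refl => exact Relation.ReflTransGen.refl
  | tail _ h2 ih => exact ih.tail (C.red_app_left _ _ _ h2)

lemma rt_app_right {t t' : Tm} (s : Tm) (h : Relation.ReflTransGen C.Red t t') :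
    Relation.ReflTransGen C.Red (C.app s t) (C.app s t') := by
  induction h with
  | refl => exact Relation.ReflTransGen.refl
  | tail _ h2 ih => exact ih.tail (C.red_app_right _ _ _ h2)

lemma rt_tapp {s s' : Tm} (κ : Kind) (ρ : Con κ) (h : Relation.ReflTransGen C.Red s s') :
    Relation.ReflTransGen C.Red (C.tapp κ s ρ) (C.tapp κ s' ρ) := by
  induction h with
  | refl => exact Relation.ReflTransGen.refl
  | tail _ h2 ih => exact ih.tail (C.red_tapp _ _ _ _ h2)

lemma resp {P : ℕ → ℕ → Prop} {R : ITy Con → Tm → Tm → Prop}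
    (hU : Unfolds C.app C.tapp C.Normal C.nf P R) :
    ∀ (σ : ITy Con) (s s' t : Tm), Relation.ReflTransGen C.Red s s' →
      (R σ s t ↔ R σ s' t) := by
  intro σ
  induction σ with
  | nat =>
    intro s s' t h
    rw [hU.1, hU.1, nf_rt C h]
  | arrow a b iha ihb =>
    intro s s' t h
    rw [hU.2.1, hU.2.1]
    constructor
    · intro H q hq
      exact (ihb _ _ _ (rt_app_left C q h)).mp (H q hq)
    · intro H q hq
      exact (ihb _ _ _ (rt_app_left C q h)).mpr (H q hq)
  | all κ body ih =>
    intro s s' t h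
    rw [hU.2.2, hU.2.2]
    constructor
    · intro H ρ
      exact (ih ρ _ _ _ (rt_tapp C κ ρ h)).mp (H ρ)
    · intro H ρ
      exact (ih ρ _ _ _ (rt_tapp C κ ρ h)).mpr (H ρ)

lemma main_aux :
    ∀ (σ : ITy Con),
      (∀ s t : Tm, C.wsucc σ (C.plus σ s t) s ∧ C.wsucc σ (C.plus σ s t) t) ∧
      (∀ (s t : Tm) (n : ℕ), 0 < n →
        Relation.ReflTransGen C.Red t (C.lift σ (C.lit n)) →
        C.succ σ (C.plus σ s t) s ∧ C.succ σ (C.plus σ t s) s) := by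
  intro σ
  induction σ with
  | nat =>
    constructor
    · intro s t
      constructor <;>
      · rw [C.wsucc_unfold.1, C.nf_plus_nat]; omega
    · intro s t n hn ht
      have h1 : C.nf t = n := by
        rw [nf_rt C ht, C.nf_lift_nat, C.nf_lit]
      constructor <;>
      · rw [C.succ_unfold.1, C.nf_plus_nat]; omega
  | arrow a b iha ihb =>
    constructor
    · intro s t
      constructor
      · rw [C.wsucc_unfold.2.1]
        intro q hq
        rw [resp C C.wsucc_unfold b _ _ _ (C.red_plus_arrow a b s t q)]
        exact (ihb.1 _ _).1
      · rw [C.wsucc_unfold.2.1]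
        intro q hq
        rw [resp C C.wsucc_unfold b _ _ _ (C.red_plus_arrow a b s t q)]
        exact (ihb.1 _ _).2
    · intro s t n hn ht
      constructor
      · rw [C.succ_unfold.2.1]
        intro q hq
        rw [resp C C.succ_unfold b _ _ _ (C.red_plus_arrow a b s t q)]
        refine (ihb.2 _ _ n hn ?_).1
        exact (rt_app_left C q ht).trans (C.red_lift_arrow a b (C.lit n) q)
      · rw [C.succ_unfold.2.1]
        intro q hq
        rw [resp C C.succ_unfold b _ _ _ (C.red_plus_arrow a b t s q)]
        refine (ihb.2 _ _ n hn ?_).2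
        exact (rt_app_left C q ht).trans (C.red_lift_arrow a b (C.lit n) q)
  | all κ body ih =>
    constructor
    · intro s t
      constructor
      · rw [C.wsucc_unfold.2.2]
        intro ρ
        rw [resp C C.wsucc_unfold _ _ _ _ (C.red_plus_all κ body s t ρ)]
        exact ((ih ρ).1 _ _).1
      · rw [C.wsucc_unfold.2.2]
        intro ρ
        rw [resp C C.wsucc_unfold _ _ _ _ (C.red_plus_all κ body s t ρ)]
        exact ((ih ρ).1 _ _).2
    · intro s t n hn ht
      constructor
      · rw [C.succ_unfold.2.2]
        intro ρ
        rw [resp C C.succ_unfold _ _ _ _ (C.red_plus_all κ body s t ρ)]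
        refine ((ih ρ).2 _ _ n hn ?_).1
        exact (rt_tapp C κ ρ ht).trans (C.red_lift_all κ body (C.lit n) ρ)
      · rw [C.succ_unfold.2.2]
        intro ρ
        rw [resp C C.succ_unfold _ _ _ _ (C.red_plus_all κ body t s ρ)]
        refine ((ih ρ).2 _ _ n hn ?_).2
        exact (rt_tapp C κ ρ ht).trans (C.red_lift_all κ body (C.lit n) ρ)

end Aux

/-- Subterm and strict-increase laws: `s ⊕_σ t ⪰ s`, `s ⊕_σ t ⪰ t`, and for
`n > 0`, `s ⊕_σ lift_σ(n) ≻ s` and `lift_σ(n) ⊕_σ t ≻ t`. -/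
theorem plus_subterm_and_strict_increase
    {Con : Kind → Type} {Tm : Type} (C : InterpCalc Con Tm) :
    ∀ (σ : ITy Con) (s t : Tm) (n : ℕ),
      C.wsucc σ (C.plus σ s t) s ∧
      C.wsucc σ (C.plus σ s t) t ∧
      (0 < n →
        C.succ σ (C.plus σ s (C.lift σ (C.lit n))) s ∧
        C.succ σ (C.plus σ (C.lift σ (C.lit n)) t) t) := by
  intro σ s t n
  refine ⟨(main_aux C σ).1 s t |>.1, (main_aux C σ).1 s t |>.2, fun hn => ?_⟩
  exact ⟨((main_aux C σ).2 s _ n hn Relation.ReflTransGen.refl).1,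
         ((main_aux C σ).2 t _ n hn Relation.ReflTransGen.refl).2⟩
end
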